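/- arXiv:1410.3010 — 2 statements merged into one kernel-verified Lean document; each statement's English description precedes it below -/
import Mathlib

section
/- Let v, w, x, y be 0/1 vectors of length m with exactly t ones each, with v < w < min{x, y} in binary order. If c1(v,w) = c1(v,x), then c1(v,y) ≠ c1(w,x). -/
/-- Binary order on 0/1 vectors of length `m` (coordinate 0 most significant). -/
def binLT {m : ℕ} (v w : Fin m → Bool) : Prop :=
  ∃ i : Fin m, v i = false ∧ w i = true ∧ ∀ j < i, v j = w j

/-- `c1Spec v w i` : `i` is the minimum index with `v i = 0` and `w i = 1`. -/
def c1Spec {m : ℕ} (v w : Fin m → Bool) (i : Fin m) : Prop :=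
  v i = false ∧ w i = true ∧ ∀ j < i, ¬(v j = false ∧ w j = true)

/-!
Let `i = c1(v,w) = c1(v,x)` and suppose `k = c1(v,y) = c1(w,x)`. Since `v` and `w` agree
before `i` and `w i = 1`, we get `i < k`, hence `y i = 0`. As `w i = 1` and `w < y`, the first
difference of `w` and `y` lies at some `j < i`, where `v j = w j = 0` and `y j = 1`; so
`c1(v,y) ≤ j < k`, a contradiction.
-/

section

variable {m : ℕ} {v w : Fin m → Bool} {i j : Fin m}

lemma c1Spec.le_of_false_of_true (h : c1Spec v w i) (hv : v j = false) (hw : w j = true) :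
    i ≤ j :=
  not_lt.mp fun hji => h.2.2 j hji ⟨hv, hw⟩

lemma binLT.eq_of_lt_c1Spec (h : binLT v w) (hi : c1Spec v w i) (hj : j < i) : v j = w j := by
  obtain ⟨i', hvi', hwi', hagree⟩ := h
  exact hagree j (hj.trans_le (hi.le_of_false_of_true hvi' hwi'))

lemma binLT.exists_lt_of_true_of_false (h : binLT v w) (hv : v i = true) (hw : w i = false) :
    ∃ j < i, v j = false ∧ w j = true := by
  obtain ⟨j, hvj, hwj, hagree⟩ := h
  refine ⟨j, ?_, hvj, hwj⟩
  by_contra! hij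
  rcases hij.lt_or_eq with hlt | rfl
  · simpa [hv, hw] using hagree i hlt
  · simp [hv] at hvj

end

theorem stmt_1_general {m : ℕ} (v w x y : Fin m → Bool)
    (hvw : binLT v w) (hwy : binLT w y)
    (i i₁ i₂ : Fin m)
    (hvw1 : c1Spec v w i) (hvx1 : c1Spec v x i)
    (hvy1 : c1Spec v y i₁) (hwx1 : c1Spec w x i₂) :
    i₁ ≠ i₂ := by
  rintro rfl
  have hik : i < i₁ := by
    refine lt_of_le_of_ne (not_lt.mp fun hki => ?_) ?_
    · have hvk := (hvw.eq_of_lt_c1Spec hvw1 hki).trans hwx1.1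
      exact hki.not_ge (hvx1.le_of_false_of_true hvk hwx1.2.1)
    · rintro rfl
      exact absurd hvw1.2.1 (by simp [hwx1.1])
  have hyi : y i = false := by
    by_contra h
    exact hik.not_ge (hvy1.le_of_false_of_true hvw1.1 (by simpa using h))
  obtain ⟨j, hji, hwj, hyj⟩ := hwy.exists_lt_of_true_of_false hvw1.2.1 hyi
  have hvj := (hvw.eq_of_lt_c1Spec hvw1 hji).trans hwj
  exact (hji.trans hik).not_ge (hvy1.le_of_false_of_true hvj hyj)

theorem stmt_1 {m t : ℕ} (v w x y : Fin m → Bool)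
    (hv : (Finset.univ.filter fun i => v i = true).card = t)
    (hw : (Finset.univ.filter fun i => w i = true).card = t)
    (hx : (Finset.univ.filter fun i => x i = true).card = t)
    (hy : (Finset.univ.filter fun i => y i = true).card = t)
    (hvw : binLT v w) (hwx : binLT w x) (hwy : binLT w y)
    (i i₁ i₂ : Fin m)
    (hvw1 : c1Spec v w i) (hvx1 : c1Spec v x i)
    (hvy1 : c1Spec v y i₁) (hwx1 : c1Spec w x i₂) :
    i₁ ≠ i₂ :=
  stmt_1_general v w x y hvw hwy i i₁ i₂ hvw1 hvx1 hvy1 hwx1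
end

section
/- Let i < i' be positive integers and let v, w, x, y be 0/1 vectors of length m with v < w < min{x,y} in binary order. If the first differing coordinate of v and w is i, the first differing coordinate of v and x is i, and the first differing coordinate of v and y is i', then it is impossible that the first differing coordinate of w and x is also i' — concretely, assuming all four conditions leads to w > y, contradicting w < y. -/
/-- `i` is the first coordinate where `v` and `w` differ. -/
def firstDiff {m : ℕ} (v w : Fin m → Bool) (i : Fin m) : Prop :=
  v i ≠ w i ∧ ∀ j < i, v j = w j

section BinaryOrder

variable {m : ℕ} {u v w : Fin m → Bool} {i j : Fin m}

theorem firstDiff.eq (hi : firstDiff u v i) (hj : firstDiff u v j) : i = j := by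
  by_contra hne
  rcases lt_or_gt_of_ne hne with h | h
  · exact hi.1 (hj.2 i h)
  · exact hj.1 (hi.2 j h)

theorem firstDiff.symm (h : firstDiff u v i) : firstDiff v u i :=
  ⟨Ne.symm h.1, fun k hk => (h.2 k hk).symm⟩

theorem binLT.exists_firstDiff (h : binLT u v) :
    ∃ i, firstDiff u v i ∧ u i = false ∧ v i = true := by
  obtain ⟨i, hu, hv, hpre⟩ := h
  exact ⟨i, ⟨by simp [hu, hv], hpre⟩, hu, hv⟩

theorem binLT.apply_firstDiff (h : binLT u v) (hi : firstDiff u v i) :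
    u i = false ∧ v i = true := by
  obtain ⟨j, hj, hu, hv⟩ := h.exists_firstDiff
  rw [hi.eq hj]
  exact ⟨hu, hv⟩

theorem binLT.asymm (huv : binLT u v) (hvu : binLT v u) : False := by
  obtain ⟨i, hi, hui, -⟩ := huv.exists_firstDiff
  obtain ⟨j, hj, -, huj⟩ := hvu.exists_firstDiff
  have hij : i = j := hi.eq hj.symm
  subst hij
  rw [hui] at huj
  exact Bool.false_ne_true huj

theorem binLT_of_firstDiff_lt (huw : binLT u w) (hw : firstDiff u w i) (hv : firstDiff u v j)
    (hij : i < j) : binLT v w := by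
  obtain ⟨hui, hwi⟩ := huw.apply_firstDiff hw
  refine ⟨i, ?_, hwi, fun k hk => ?_⟩
  · rw [← hv.2 i hij, hui]
  · rw [← hv.2 k (hk.trans hij), hw.2 k hk]

end BinaryOrder

theorem stmt_15_general {m : ℕ} (v w x y : Fin m → Bool) (i i' : Fin m) (hii' : i < i')
    (hvw : binLT v w) (hwy : binLT w y)
    (h1 : firstDiff v w i) (h3 : firstDiff v y i') :
    ¬ firstDiff w x i' :=
  fun _ => (binLT_of_firstDiff_lt hvw h1 h3 hii').asymm hwy

theorem stmt_15 {m : ℕ} (v w x y : Fin m → Bool) (i i' : Fin m) (hii' : i < i')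
    (hvw : binLT v w) (hwx : binLT w x) (hwy : binLT w y)
    (h1 : firstDiff v w i) (h2 : firstDiff v x i) (h3 : firstDiff v y i') :
    ¬ firstDiff w x i' :=
  stmt_15_general v w x y i i' hii' hvw hwy h1 h3
end
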